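/- arXiv:1304.2444 — 2 statements merged into one kernel-verified Lean document; each statement's English description precedes it below -/
import Mathlib

section
/- If U₁ → X → Y (i.e., I(U₁ ∧ Y | X) = 0), g₂ is a function of Y with X → g₂(Y) → Y, then X → (g₂(Y), U₁) → Y, i.e., I(X ∧ Y | g₂(Y), U₁) = 0. -/
open scoped Classical
open Finset Real

noncomputable section

variable {Ω : Type*} [Fintype Ω]

/-- Pushforward probability of value `x` under random variable `X` w.r.t. pmf `p`. -/
def dist' {α : Type*} (p : Ω → ℝ) (X : Ω → α) (x : α) : ℝ :=
  ∑ ω, if X ω = x then p ω else 0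

/-- Shannon entropy, base 2. -/
def ent {α : Type*} [Fintype α] (p : Ω → ℝ) (X : Ω → α) : ℝ :=
  -∑ x, dist' p X x * Real.logb 2 (dist' p X x)

/-- Conditional entropy `H(X | Y)`. -/
def condEnt {α β : Type*} [Fintype α] [Fintype β] (p : Ω → ℝ) (X : Ω → α) (Y : Ω → β) : ℝ :=
  ent p (fun ω => (X ω, Y ω)) - ent p Y

/-- Mutual information `I(X ∧ Y)`. -/
def mi {α β : Type*} [Fintype α] [Fintype β] (p : Ω → ℝ) (X : Ω → α) (Y : Ω → β) : ℝ :=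
  ent p X + ent p Y - ent p (fun ω => (X ω, Y ω))

/-- Conditional mutual information `I(X ∧ Y | Z)`. -/
def cmi {α β γ : Type*} [Fintype α] [Fintype β] [Fintype γ]
    (p : Ω → ℝ) (X : Ω → α) (Y : Ω → β) (Z : Ω → γ) : ℝ :=
  ent p (fun ω => (X ω, Z ω)) + ent p (fun ω => (Y ω, Z ω))
    - ent p (fun ω => ((X ω, Y ω), Z ω)) - ent p Z

/-- `p` is a probability mass function on `Ω`. -/
def IsPMF (p : Ω → ℝ) : Prop := (∀ ω, 0 ≤ p ω) ∧ ∑ ω, p ω = 1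


/-! Since `g₂(Y)` is a function of `Y`, `I(U₁ ∧ Y | X) = I(U₁ ∧ (g₂(Y), Y) | X)`, and the chain rule
splits this into two nonnegative terms, so `I(U₁ ∧ Y | X, g₂(Y)) = 0`. With `I(X ∧ Y | g₂(Y)) = 0`
the chain rule gives `I((X, U₁) ∧ Y | g₂(Y)) = 0`, and expanding the same quantity in the other
order yields `I(X ∧ Y | g₂(Y), U₁) = 0`. Nonnegativity of conditional mutual information is
Gibbs' inequality, proved from `log t ≤ t - 1`. -/

section

variable {α β γ δ α' β' γ' : Type*} (p : Ω → ℝ)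

lemma sum_dist'_mul [Fintype α] (X : Ω → α) (f : α → ℝ) :
    ∑ x, dist' p X x * f x = ∑ ω, p ω * f (X ω) := by
  simp only [dist', Finset.sum_mul, ite_mul, zero_mul]
  rw [Finset.sum_comm]
  simp only [Finset.sum_ite_eq, Finset.mem_univ, if_true]

lemma sum_dist' [Fintype α] (X : Ω → α) : ∑ x, dist' p X x = ∑ ω, p ω := by
  simpa using sum_dist'_mul p X 1

lemma ent_eq_sum [Fintype α] (X : Ω → α) :
    ent p X = -∑ ω, p ω * logb 2 (dist' p X (X ω)) := by
  rw [ent, sum_dist'_mul p X fun x => logb 2 (dist' p X x)]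

lemma ent_congr [Fintype α] [Fintype β] {X : Ω → α} {Y : Ω → β}
    (h : ∀ ω ω', X ω = X ω' ↔ Y ω = Y ω') : ent p X = ent p Y := by
  have hdist : ∀ ω, dist' p X (X ω) = dist' p Y (Y ω) := fun ω =>
    Finset.sum_congr rfl fun ω' _ => by rw [h]
  simp only [ent_eq_sum, hdist]

lemma cmi_congr [Fintype α] [Fintype β] [Fintype γ] [Fintype α'] [Fintype β'] [Fintype γ']
    {X : Ω → α} {Y : Ω → β} {Z : Ω → γ} {X' : Ω → α'} {Y' : Ω → β'} {Z' : Ω → γ'}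
    (hX : ∀ ω ω', X ω = X ω' ↔ X' ω = X' ω') (hY : ∀ ω ω', Y ω = Y ω' ↔ Y' ω = Y' ω')
    (hZ : ∀ ω ω', Z ω = Z ω' ↔ Z' ω = Z' ω') : cmi p X Y Z = cmi p X' Y' Z' := by
  have hXZ : ent p (fun ω => (X ω, Z ω)) = ent p (fun ω => (X' ω, Z' ω)) :=
    ent_congr p fun ω ω' => by simp only [Prod.mk.injEq, hX, hZ]
  have hYZ : ent p (fun ω => (Y ω, Z ω)) = ent p (fun ω => (Y' ω, Z' ω)) :=
    ent_congr p fun ω ω' => by simp only [Prod.mk.injEq, hY, hZ]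
  have hXYZ : ent p (fun ω => ((X ω, Y ω), Z ω)) = ent p (fun ω => ((X' ω, Y' ω), Z' ω)) :=
    ent_congr p fun ω ω' => by simp only [Prod.mk.injEq, hX, hY, hZ]
  rw [cmi, cmi, hXZ, hYZ, hXYZ, ent_congr p hZ]

lemma cmi_comm [Fintype α] [Fintype β] [Fintype γ] (X : Ω → α) (Y : Ω → β) (Z : Ω → γ) :
    cmi p X Y Z = cmi p Y X Z := by
  rw [cmi, cmi, ent_congr p (X := fun ω => ((X ω, Y ω), Z ω)) (Y := fun ω => ((Y ω, X ω), Z ω))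
    (by simp only [Prod.mk.injEq, and_comm, implies_true])]
  ring

lemma cmi_chain [Fintype α] [Fintype β] [Fintype γ] [Fintype δ]
    (A : Ω → α) (B : Ω → β) (Y : Ω → γ) (Z : Ω → δ) :
    cmi p (fun ω => (A ω, B ω)) Y Z = cmi p A Y Z + cmi p B Y (fun ω => (Z ω, A ω)) := by
  simp only [cmi]
  rw [ent_congr p (X := fun ω => (A ω, Z ω)) (Y := fun ω => (Z ω, A ω))
      (by simp only [Prod.mk.injEq, and_comm, implies_true]),
    ent_congr p (X := fun ω => ((A ω, B ω), Z ω)) (Y := fun ω => (B ω, (Z ω, A ω)))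
      (by simp only [Prod.mk.injEq]; tauto),
    ent_congr p (X := fun ω => ((A ω, Y ω), Z ω)) (Y := fun ω => (Y ω, (Z ω, A ω)))
      (by simp only [Prod.mk.injEq]; tauto),
    ent_congr p (X := fun ω => (((A ω, B ω), Y ω), Z ω)) (Y := fun ω => ((B ω, Y ω), (Z ω, A ω)))
      (by simp only [Prod.mk.injEq]; tauto)]
  ring

lemma dist'_nonneg {p : Ω → ℝ} (hp : ∀ ω, 0 ≤ p ω) (X : Ω → α) (x : α) : 0 ≤ dist' p X x :=
  Finset.sum_nonneg fun ω _ => by split_ifs <;> simp [hp ω]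

lemma sum_dist'_comp_prod [Fintype β] {f : β × γ → δ} (hf : Function.Injective f)
    (V : Ω → β) (W : Ω → γ) (w : γ) :
    ∑ b, dist' p (fun ω => f (V ω, W ω)) (f (b, w)) = dist' p W w := by
  simp only [dist', hf.eq_iff, Prod.mk.injEq, ite_and]
  rw [Finset.sum_comm]
  simp only [Finset.sum_ite_eq, Finset.mem_univ, if_true]

lemma dist'_comp_prod_le [Fintype β] {p : Ω → ℝ} (hp : ∀ ω, 0 ≤ p ω) {f : β × γ → δ}
    (hf : Function.Injective f) (V : Ω → β) (W : Ω → γ) (b : β) (w : γ) :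
    dist' p (fun ω => f (V ω, W ω)) (f (b, w)) ≤ dist' p W w := by
  rw [← sum_dist'_comp_prod p hf V W w]
  exact Finset.single_le_sum (f := fun b => dist' p (fun ω => f (V ω, W ω)) (f (b, w)))
    (fun b _ => dist'_nonneg hp _ _) (Finset.mem_univ b)

lemma sub_mul_div_le_mul_logb {a A B C : ℝ} (ha : 0 ≤ a) (hA : a ≤ A) (hB : a ≤ B)
    (hC : A ≤ C) : (a - A * B / C) / log 2 ≤ a * (logb 2 a + logb 2 C - logb 2 A - logb 2 B) := by
  rcases ha.eq_or_lt with rfl | ha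
  · have : 0 ≤ A * B / C := div_nonneg (mul_nonneg hA hB) (hA.trans hC)
    rw [zero_mul]
    exact div_nonpos_of_nonpos_of_nonneg (by linarith) (log_nonneg one_le_two)
  have hA' : 0 < A := ha.trans_le hA
  have hB' : 0 < B := ha.trans_le hB
  have hC' : 0 < C := hA'.trans_le hC
  have hlog : log (A * B / C / a) ≤ A * B / C / a - 1 := log_le_sub_one_of_pos (by positivity)
  rw [log_div (by positivity) ha.ne', log_div (by positivity) hC'.ne',
    log_mul hA'.ne' hB'.ne'] at hlog
  have hcancel : a * (A * B / C / a) = A * B / C := mul_div_cancel₀ _ ha.ne'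
  have hnat : a - A * B / C ≤ a * (log a + log C - log A - log B) := by
    nlinarith [mul_le_mul_of_nonneg_left hlog ha.le]
  have hlogb : a * (logb 2 a + logb 2 C - logb 2 A - logb 2 B)
      = a * (log a + log C - log A - log B) / log 2 := by
    simp only [logb]; ring
  rw [hlogb]
  gcongr

lemma sum_dist'_mul_dist'_div [Fintype α] [Fintype β] [Fintype γ]
    (X : Ω → α) (Y : Ω → β) (Z : Ω → γ) :
    ∑ v : (α × β) × γ, dist' p (fun ω => (X ω, Z ω)) (v.1.1, v.2)
      * dist' p (fun ω => (Y ω, Z ω)) (v.1.2, v.2) / dist' p Z v.2 = ∑ ω, p ω := by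
  have hX : ∀ z, ∑ x, dist' p (fun ω => (X ω, Z ω)) (x, z) = dist' p Z z :=
    sum_dist'_comp_prod p Function.injective_id X Z
  have hY : ∀ z, ∑ y, dist' p (fun ω => (Y ω, Z ω)) (y, z) = dist' p Z z :=
    sum_dist'_comp_prod p Function.injective_id Y Z
  rw [Fintype.sum_prod_type, Finset.sum_comm, ← sum_dist' p Z]
  refine Finset.sum_congr rfl fun z _ => ?_
  rw [Fintype.sum_prod_type]
  simp only [← Finset.sum_div, ← Finset.sum_mul_sum, hX, hY, mul_self_div_self]

lemma cmi_eq_sum [Fintype α] [Fintype β] [Fintype γ] (X : Ω → α) (Y : Ω → β) (Z : Ω → γ) :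
    cmi p X Y Z = ∑ v : (α × β) × γ, dist' p (fun ω => ((X ω, Y ω), Z ω)) v *
      (logb 2 (dist' p (fun ω => ((X ω, Y ω), Z ω)) v) + logb 2 (dist' p Z v.2)
        - logb 2 (dist' p (fun ω => (X ω, Z ω)) (v.1.1, v.2))
        - logb 2 (dist' p (fun ω => (Y ω, Z ω)) (v.1.2, v.2))) := by
  rw [sum_dist'_mul]
  simp only [cmi, ent_eq_sum, mul_add, mul_sub, Finset.sum_add_distrib, Finset.sum_sub_distrib]
  ring

/-- By `log t ≤ t - 1` each term of `cmi_eq_sum` is at least `(a - A * B / C) / log 2`, with `a`,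
`A`, `B`, `C` the probabilities of `((x, y), z)`, `(x, z)`, `(y, z)`, `z`; these bounds sum to
zero. -/
lemma cmi_nonneg [Fintype α] [Fintype β] [Fintype γ] {p : Ω → ℝ} (hp : ∀ ω, 0 ≤ p ω)
    (X : Ω → α) (Y : Ω → β) (Z : Ω → γ) : 0 ≤ cmi p X Y Z := by
  rw [cmi_eq_sum]
  calc (0 : ℝ)
      = ∑ v : (α × β) × γ, (dist' p (fun ω => ((X ω, Y ω), Z ω)) v
          - dist' p (fun ω => (X ω, Z ω)) (v.1.1, v.2)
            * dist' p (fun ω => (Y ω, Z ω)) (v.1.2, v.2) / dist' p Z v.2) / log 2 := by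
        rw [← Finset.sum_div, Finset.sum_sub_distrib, sum_dist', sum_dist'_mul_dist'_div,
          sub_self, zero_div]
    _ ≤ _ := by
        refine Finset.sum_le_sum fun v _ => sub_mul_div_le_mul_logb (dist'_nonneg hp _ _) ?_ ?_ ?_
        · exact dist'_comp_prod_le hp (f := fun t => ((t.2.1, t.1), t.2.2))
            (Function.LeftInverse.injective (g := fun s => (s.1.2, (s.1.1, s.2))) fun _ => rfl)
            Y (fun ω => (X ω, Z ω)) v.1.2 (v.1.1, v.2)
        · exact dist'_comp_prod_le hp (f := fun t => ((t.1, t.2.1), t.2.2))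
            (Function.LeftInverse.injective (g := fun s => (s.1.1, (s.1.2, s.2))) fun _ => rfl)
            X (fun ω => (Y ω, Z ω)) v.1.1 (v.1.2, v.2)
        · exact dist'_comp_prod_le hp (f := id) Function.injective_id X Z v.1.1 v.2

lemma cmi_pair_eq_zero_iff [Fintype α] [Fintype β] [Fintype γ] [Fintype δ] {p : Ω → ℝ}
    (hp : ∀ ω, 0 ≤ p ω) (A : Ω → α) (B : Ω → β) (Y : Ω → γ) (Z : Ω → δ) :
    cmi p (fun ω => (A ω, B ω)) Y Z = 0 ↔
      cmi p A Y Z = 0 ∧ cmi p B Y (fun ω => (Z ω, A ω)) = 0 := by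
  rw [cmi_chain]
  exact add_eq_zero_iff_of_nonneg (cmi_nonneg hp _ _ _) (cmi_nonneg hp _ _ _)

end

/-- If `U₁ -∘- X -∘- Y` and `X -∘- g₂(Y) -∘- Y`, then `X -∘- (g₂(Y), U₁) -∘- Y`. -/
theorem stmt17 {Ω 𝒳 𝒴 𝒰 γ : Type*} [Fintype Ω] [Fintype 𝒳] [Fintype 𝒴] [Fintype 𝒰] [Fintype γ]
    (p : Ω → ℝ) (hp : IsPMF p) (X : Ω → 𝒳) (Y : Ω → 𝒴) (U₁ : Ω → 𝒰) (g₂ : 𝒴 → γ)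
    (hU : cmi p U₁ Y X = 0)
    (hg : cmi p X Y (fun ω => g₂ (Y ω)) = 0) :
    cmi p X Y (fun ω => (g₂ (Y ω), U₁ ω)) = 0 := by
  have hYU : cmi p (fun ω => (g₂ (Y ω), Y ω)) U₁ X = 0 := by
    rw [cmi_congr p (X' := Y) (Y' := U₁) (Z' := X)
      (fun _ _ => by rw [Prod.mk.injEq]; exact and_iff_right_of_imp (congrArg g₂))
      (fun _ _ => Iff.rfl) (fun _ _ => Iff.rfl), cmi_comm, hU]
  have hUY : cmi p U₁ Y (fun ω => (g₂ (Y ω), X ω)) = 0 := by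
    rw [cmi_comm, cmi_congr p (X' := Y) (Y' := U₁) (Z' := fun ω => (X ω, g₂ (Y ω)))
      (fun _ _ => Iff.rfl) (fun _ _ => Iff.rfl) (fun _ _ => by simp only [Prod.mk.injEq, and_comm])]
    exact ((cmi_pair_eq_zero_iff hp.1 _ _ _ _).1 hYU).2
  have hXU : cmi p (fun ω => (U₁ ω, X ω)) Y (fun ω => g₂ (Y ω)) = 0 := by
    rw [cmi_congr p (X' := fun ω => (X ω, U₁ ω)) (Y' := Y) (Z' := fun ω => g₂ (Y ω))
      (fun _ _ => by simp only [Prod.mk.injEq, and_comm]) (fun _ _ => Iff.rfl) (fun _ _ => Iff.rfl)]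
    exact (cmi_pair_eq_zero_iff hp.1 _ _ _ _).2 ⟨hg, hUY⟩
  exact ((cmi_pair_eq_zero_iff hp.1 _ _ _ _).1 hXU).2
end
end

section
/- Consider the 3×3 joint pmf on {0,1,2}² given (rows indexed by X, columns by Y) by [[a,a,a],[b,a,a],[a,c,a]] with a,b,c ≥ 0, 7a+b+c = 1, 2a > b > a, and c ≠ a. Then with U₁ = f₁(X) where f₁(2)=1, f₁(0)=f₁(1)=2, and U₂ = f₂(Y,U₁) where f₂(·,1)=0, f₂(0,2)=1, f₂(1,2)=f₂(2,2)=2, the chain X → (U₁,U₂) → Y holds and I(X,Y ∧ U₁,U₂) = H(U₁,U₂) < min{H(X), H(Y)}. -/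
/-!
Since `(U₁, U₂)` is a function of `(X, Y)`, `H(X, Y, U₁, U₂) = H(X, Y)`, which gives
`I(X, Y ∧ U₁, U₂) = H(U₁, U₂)`. Given the transcript `(U₁, U₂)`, `X` and `Y` are independent:
`(1, 0)` forces `X = 2`, `(2, 1)` forces `Y = 0`, and on `(2, 2)` the pmf is uniform on
`{0, 1} × {1, 2}`.
The marginals of `X` and `Y` are both `(3a, 2a + b, 2a + c)`, that of the transcript is
`(a + b, 4a, 2a + c)`; as `a + b < 3a, 2a + b < 4a` with equal sums, strict convexity of
`t ↦ t log t` gives `H(U₁, U₂) < H(X) = H(Y)`.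
-/

open scoped Classical
open Finset Real

noncomputable section

variable {Ω : Type*} [Fintype Ω]

/-- First message map. -/
def f₁ : Fin 3 → Fin 3 := ![2, 2, 1]

/-- Second message map: `f₂(y, 1) = 0`, `f₂(0, 2) = 1`, `f₂(1, 2) = f₂(2, 2) = 2`. -/
def f₂ : Fin 3 → Fin 3 → Fin 3 := fun y u => if u = 1 then 0 else if y = 0 then 1 else 2

lemma StrictConvexOn.map_add_map_lt {𝕜 : Type*} [Field 𝕜] [LinearOrder 𝕜]
    [IsStrictOrderedRing 𝕜] {s : Set 𝕜} {f : 𝕜 → 𝕜} (hf : StrictConvexOn 𝕜 s f) {u v x y : 𝕜}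
    (hu : u ∈ s) (hv : v ∈ s) (hux : u < x) (hxv : x < v) (hsum : x + y = u + v) :
    f x + f y < f u + f v := by
  have huv : u < v := hux.trans hxv
  have hθ : 0 < (v - x) / (v - u) := div_pos (by linarith) (by linarith)
  have hθ' : 0 < (x - u) / (v - u) := div_pos (by linarith) (by linarith)
  have hw : (v - x) / (v - u) + (x - u) / (v - u) = 1 := by field
  have hx := hf.2 hu hv huv.ne hθ hθ' hw
  have hy := hf.2 hu hv huv.ne hθ' hθ (by rw [add_comm, hw])
  obtain rfl : y = u + v - x := by linear_combination hsum
  simp only [smul_eq_mul] at hx hy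
  rw [show (v - x) / (v - u) * u + (x - u) / (v - u) * v = x by field] at hx
  rw [show (x - u) / (v - u) * u + (v - x) / (v - u) * v = u + v - x by field] at hy
  calc f x + f (u + v - x)
      < ((v - x) / (v - u) * f u + (x - u) / (v - u) * f v)
        + ((x - u) / (v - u) * f u + (v - x) / (v - u) * f v) := add_lt_add hx hy
    _ = ((v - x) / (v - u) + (x - u) / (v - u)) * (f u + f v) := by ring
    _ = f u + f v := by rw [hw, one_mul]

lemma mul_logb_add_mul_logb_lt {b u v x y : ℝ} (hb : 1 < b) (hu : 0 ≤ u) (hux : u < x)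
    (hxv : x < v) (hsum : x + y = u + v) :
    x * logb b x + y * logb b y < u * logb b u + v * logb b v := by
  have h := strictConvexOn_mul_log.map_add_map_lt (Set.mem_Ici.2 hu)
    (Set.mem_Ici.2 (hu.trans (hux.trans hxv).le)) hux hxv hsum
  simp only [logb, ← mul_div_assoc, ← add_div]
  exact div_lt_div_of_pos_right h (log_pos hb)

lemma dist'_comp {α β : Type*} [Fintype β] (p : Ω → ℝ) (V : Ω → β) (g : β → α) (z : α) :
    dist' p (fun ω => g (V ω)) z = ∑ v, if g v = z then dist' p V v else 0 := by
  calc dist' p (fun ω => g (V ω)) z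
      = ∑ ω, ∑ v, if V ω = v then (if g v = z then p ω else 0) else 0 := by simp [dist']
    _ = ∑ v, if g v = z then dist' p V v else 0 := by
      rw [Finset.sum_comm]
      refine Finset.sum_congr rfl fun v _ => ?_
      split_ifs <;> simp [dist', *]

lemma ent_comp {α β : Type*} [Fintype α] [Fintype β] (p : Ω → ℝ) (V : Ω → β) (g : β → α) :
    ent p (fun ω => g (V ω)) = -∑ z, (∑ v, if g v = z then dist' p V v else 0)
      * logb 2 (∑ v, if g v = z then dist' p V v else 0) := by
  simp only [ent, dist'_comp]

lemma ent_prod_comp_self {α β : Type*} [Fintype α] [Fintype β] (p : Ω → ℝ) (V : Ω → β)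
    (g : β → α) : ent p (fun ω => (V ω, g (V ω))) = ent p V := by
  have hdist : ∀ v z, dist' p (fun ω => (V ω, g (V ω))) (v, z)
      = if g v = z then dist' p V v else 0 := by
    intro v z
    rw [dist'_comp p V (fun v => (v, g v))]
    simp [Prod.ext_iff, ite_and]
  simp only [ent, Fintype.sum_prod_type, hdist]
  congr 1
  refine Finset.sum_congr rfl fun v _ => ?_
  simp [apply_ite (fun t => t * logb 2 t)]

lemma two_mul_mul_logb_two_mul {x : ℝ} (hx : x ≠ 0) :
    2 * x * logb 2 (2 * x) = 2 * x + 2 * (x * logb 2 x) := by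
  rw [logb_mul two_ne_zero hx, logb_self_eq_one one_lt_two]
  ring

def transcript (x y : Fin 3) : Fin 3 × Fin 3 := (f₁ x, f₂ y (f₁ x))

section JointTable

variable {p : Ω → ℝ} {X Y : Ω → Fin 3} {a b c : ℝ}

lemma ent_comp_of_joint {α : Type*} [Fintype α]
    (hpmf : ∀ x y, dist' p (fun ω => (X ω, Y ω)) (x, y) = !![a, a, a; b, a, a; a, c, a] x y)
    (g : Fin 3 × Fin 3 → α) :
    ent p (fun ω => g (X ω, Y ω)) = -∑ z, (∑ xy : Fin 3 × Fin 3,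
      if g xy = z then !![a, a, a; b, a, a; a, c, a] xy.1 xy.2 else 0)
      * logb 2 (∑ xy : Fin 3 × Fin 3,
      if g xy = z then !![a, a, a; b, a, a; a, c, a] xy.1 xy.2 else 0) := by
  have hdist : ∀ xy : Fin 3 × Fin 3, dist' p (fun ω => (X ω, Y ω)) xy
      = !![a, a, a; b, a, a; a, c, a] xy.1 xy.2 := fun xy => hpmf xy.1 xy.2
  simp only [ent_comp p (fun ω => (X ω, Y ω)) g, hdist]

lemma ent_fst_of_joint
    (hpmf : ∀ x y, dist' p (fun ω => (X ω, Y ω)) (x, y) = !![a, a, a; b, a, a; a, c, a] x y) :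
    ent p X = -(3 * a * logb 2 (3 * a) + (2 * a + b) * logb 2 (2 * a + b)
      + (2 * a + c) * logb 2 (2 * a + c)) := by
  refine (ent_comp_of_joint hpmf Prod.fst).trans ?_
  simp only [Matrix.of_apply, Matrix.cons_val', Matrix.cons_val_fin_one, Fintype.sum_prod_type,
    sum_ite_irrel, Fin.sum_univ_three, Fin.isValue, Matrix.cons_val_zero, Matrix.cons_val_one,
    Matrix.cons_val, sum_const_zero, sum_ite_eq', mem_univ, ↓reduceIte, neg_add_rev]
  ring_nf

lemma ent_snd_of_joint
    (hpmf : ∀ x y, dist' p (fun ω => (X ω, Y ω)) (x, y) = !![a, a, a; b, a, a; a, c, a] x y) :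
    ent p Y = -(3 * a * logb 2 (3 * a) + (2 * a + b) * logb 2 (2 * a + b)
      + (2 * a + c) * logb 2 (2 * a + c)) := by
  refine (ent_comp_of_joint hpmf Prod.snd).trans ?_
  simp only [Matrix.of_apply, Matrix.cons_val', Matrix.cons_val_fin_one, Fintype.sum_prod_type,
    sum_ite_eq', mem_univ, ↓reduceIte, Fin.sum_univ_three, Fin.isValue, Matrix.cons_val_zero,
    Matrix.cons_val_one, Matrix.cons_val, neg_add_rev]
  ring_nf

lemma ent_pair_of_joint
    (hpmf : ∀ x y, dist' p (fun ω => (X ω, Y ω)) (x, y) = !![a, a, a; b, a, a; a, c, a] x y) :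
    ent p (fun ω => (X ω, Y ω)) = -(7 * (a * logb 2 a) + b * logb 2 b + c * logb 2 c) := by
  refine (ent_comp_of_joint hpmf id).trans ?_
  simp only [id_eq, Matrix.of_apply, Matrix.cons_val', Matrix.cons_val_fin_one, sum_ite_eq',
    mem_univ, ↓reduceIte, Fintype.sum_prod_type, Fin.sum_univ_three, Fin.isValue,
    Matrix.cons_val_zero, Matrix.cons_val_one, Matrix.cons_val, neg_add_rev]
  ring_nf

lemma ent_transcript_of_joint
    (hpmf : ∀ x y, dist' p (fun ω => (X ω, Y ω)) (x, y) = !![a, a, a; b, a, a; a, c, a] x y) :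
    ent p (fun ω => transcript (X ω) (Y ω))
      = -((2 * a + c) * logb 2 (2 * a + c) + (a + b) * logb 2 (a + b)
        + 2 * (2 * a) * logb 2 (2 * (2 * a))) := by
  refine (ent_comp_of_joint hpmf fun xy => transcript xy.1 xy.2).trans ?_
  simp only [transcript, f₁, f₂, Fin.isValue, Matrix.of_apply, Matrix.cons_val',
    Matrix.cons_val_fin_one, Fintype.sum_prod_type, Fin.sum_univ_three, ↓reduceIte,
    Matrix.cons_val_zero, Matrix.cons_val_one, Matrix.cons_val, Fin.reduceEq, one_ne_zero,
    zero_ne_one, Prod.mk.injEq, and_false, and_true, add_zero, zero_add, logb_zero, mul_zero,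
    neg_add_rev]
  ring_nf

lemma ent_fst_transcript_of_joint
    (hpmf : ∀ x y, dist' p (fun ω => (X ω, Y ω)) (x, y) = !![a, a, a; b, a, a; a, c, a] x y) :
    ent p (fun ω => (X ω, transcript (X ω) (Y ω)))
      = -((2 * a + c) * logb 2 (2 * a + c) + a * logb 2 a + b * logb 2 b
        + 2 * (2 * a * logb 2 (2 * a))) := by
  refine (ent_comp_of_joint hpmf fun xy => (xy.1, transcript xy.1 xy.2)).trans ?_
  simp only [transcript, f₁, f₂, Fin.isValue, Matrix.of_apply, Matrix.cons_val',
    Matrix.cons_val_fin_one, Fintype.sum_prod_type, Fin.sum_univ_three, ↓reduceIte,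
    Matrix.cons_val_zero, Matrix.cons_val_one, Matrix.cons_val, Fin.reduceEq, one_ne_zero,
    zero_ne_one, Prod.mk.injEq, and_false, and_true, add_zero, zero_add, logb_zero, mul_zero,
    neg_add_rev]
  ring_nf

lemma ent_snd_transcript_of_joint
    (hpmf : ∀ x y, dist' p (fun ω => (X ω, Y ω)) (x, y) = !![a, a, a; b, a, a; a, c, a] x y) :
    ent p (fun ω => (Y ω, transcript (X ω) (Y ω)))
      = -(2 * (a * logb 2 a) + c * logb 2 c + (a + b) * logb 2 (a + b)
        + 2 * (2 * a * logb 2 (2 * a))) := by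
  refine (ent_comp_of_joint hpmf fun xy => (xy.2, transcript xy.1 xy.2)).trans ?_
  simp only [transcript, f₁, f₂, Fin.isValue, Matrix.of_apply, Matrix.cons_val',
    Matrix.cons_val_fin_one, Fintype.sum_prod_type, Fin.sum_univ_three, ↓reduceIte,
    Matrix.cons_val_zero, Matrix.cons_val_one, Matrix.cons_val, Fin.reduceEq, one_ne_zero,
    zero_ne_one, Prod.mk.injEq, and_false, and_true, add_zero, zero_add, logb_zero, mul_zero,
    neg_add_rev]
  ring_nf

end JointTable

theorem stmt18_general {Ω : Type*} [Fintype Ω]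
    (p : Ω → ℝ) (X : Ω → Fin 3) (Y : Ω → Fin 3) (a b c : ℝ)
    (hab : a < b) (hba : b < 2 * a)
    (hpmf : ∀ x y, dist' p (fun ω => (X ω, Y ω)) (x, y)
              = !![a, a, a; b, a, a; a, c, a] x y)
    (U₁ : Ω → Fin 3) (U₂ : Ω → Fin 3)
    (hU₁ : ∀ ω, U₁ ω = f₁ (X ω)) (hU₂ : ∀ ω, U₂ ω = f₂ (Y ω) (U₁ ω)) :
    cmi p X Y (fun ω => (U₁ ω, U₂ ω)) = 0 ∧
    mi p (fun ω => (X ω, Y ω)) (fun ω => (U₁ ω, U₂ ω))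
      = ent p (fun ω => (U₁ ω, U₂ ω)) ∧
    ent p (fun ω => (U₁ ω, U₂ ω)) < min (ent p X) (ent p Y) := by
  have ha : 0 < a := by linarith
  have hU : (fun ω => (U₁ ω, U₂ ω)) = fun ω => transcript (X ω) (Y ω) := by
    ext ω <;> simp [transcript, hU₁, hU₂]
  have hdet : ent p (fun ω => ((X ω, Y ω), transcript (X ω) (Y ω)))
      = ent p (fun ω => (X ω, Y ω)) :=
    ent_prod_comp_self p (fun ω => (X ω, Y ω)) fun xy => transcript xy.1 xy.2
  have hlog2a := two_mul_mul_logb_two_mul ha.ne'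
  have hlog4a := two_mul_mul_logb_two_mul (mul_ne_zero two_ne_zero ha.ne')
  have hmajor : 3 * a * logb 2 (3 * a) + (2 * a + b) * logb 2 (2 * a + b)
      < (a + b) * logb 2 (a + b) + 2 * (2 * a) * logb 2 (2 * (2 * a)) :=
    mul_logb_add_mul_logb_lt one_lt_two (by linarith) (by linarith) (by linarith) (by ring)
  rw [hU, cmi, mi, hdet, ent_fst_of_joint hpmf, ent_snd_of_joint hpmf, ent_pair_of_joint hpmf,
    ent_transcript_of_joint hpmf, ent_fst_transcript_of_joint hpmf,
    ent_snd_transcript_of_joint hpmf, lt_min_iff]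
  refine ⟨?_, by ring, by constructor <;> linarith⟩
  rw [hlog4a, hlog2a]
  ring

/-- The example where interaction helps: for the given 3×3 pmf, the two-message interactive
scheme `U₁ = f₁(X)`, `U₂ = f₂(Y, U₁)` satisfies `X -∘- (U₁,U₂) -∘- Y`,
`I(X,Y ∧ U₁,U₂) = H(U₁,U₂)`, and `H(U₁,U₂) < min{H(X), H(Y)}`. -/
theorem stmt18 {Ω : Type*} [Fintype Ω]
    (p : Ω → ℝ) (hp : IsPMF p) (X : Ω → Fin 3) (Y : Ω → Fin 3) (a b c : ℝ)
    (ha : 0 ≤ a) (hb : 0 ≤ b) (hc : 0 ≤ c)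
    (hsum : 7 * a + b + c = 1) (hab : a < b) (hba : b < 2 * a) (hca : c ≠ a)
    (hpmf : ∀ x y, dist' p (fun ω => (X ω, Y ω)) (x, y)
              = !![a, a, a; b, a, a; a, c, a] x y)
    (U₁ : Ω → Fin 3) (U₂ : Ω → Fin 3)
    (hU₁ : ∀ ω, U₁ ω = f₁ (X ω)) (hU₂ : ∀ ω, U₂ ω = f₂ (Y ω) (U₁ ω)) :
    cmi p X Y (fun ω => (U₁ ω, U₂ ω)) = 0 ∧
    mi p (fun ω => (X ω, Y ω)) (fun ω => (U₁ ω, U₂ ω))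
      = ent p (fun ω => (U₁ ω, U₂ ω)) ∧
    ent p (fun ω => (U₁ ω, U₂ ω)) < min (ent p X) (ent p Y) :=
  stmt18_general p X Y a b c hab hba hpmf U₁ U₂ hU₁ hU₂
end
end
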